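/- Let W ∈ Gr₂(n,k), let x' ∈ 𝔽₂ⁿ, and let CS(W^⊥) be a set of coset representatives of W^⊥ in 𝔽₂ⁿ. Then ∑_{z' ∈ CS(W^⊥)} |W_{x',z'}⟩⟨W_{x',z'}| = ∑_{w ∈ x'+W} |w⟩⟨w|, i.e. this sum equals the orthogonal projection onto the span of the computational basis vectors indexed by the coset x'+W. -/

import Mathlib

open scoped Classical

/-- The coset state `|W_{x,z}⟩ = 2^{-k/2} ∑_{u ∈ W} (-1)^{z·u} |x+u⟩` in `(ℂ²)^{⊗n}`,
identified with `EuclideanSpace ℂ (Fin n → ZMod 2)` via the computational basis. -/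
noncomputable def cosetState {n : ℕ} (W : Submodule (ZMod 2) (Fin n → ZMod 2))
    (x z : Fin n → ZMod 2) : EuclideanSpace ℂ (Fin n → ZMod 2) :=
  (((Real.sqrt 2 : ℝ) : ℂ) ^ (Module.finrank (ZMod 2) W))⁻¹ •
    ∑ u : W, ((-1 : ℂ) ^ (dotProduct z (u : Fin n → ZMod 2)).val) •
      EuclideanSpace.single (x + (u : Fin n → ZMod 2)) (1 : ℂ)

/-- The dual space `W^⊥ = {y ∈ 𝔽₂ⁿ : x·y = 0 for all x ∈ W}` with respect to the standard
bilinear form `x·y = ∑ᵢ xᵢyᵢ`. -/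
def dualSpace {n : ℕ} (W : Submodule (ZMod 2) (Fin n → ZMod 2)) :
    Submodule (ZMod 2) (Fin n → ZMod 2) where
  carrier := {y | ∀ x ∈ W, dotProduct x y = 0}
  add_mem' := by
    intro a b ha hb x hx
    simp [dotProduct_add, ha x hx, hb x hx]
  zero_mem' := by
    intro x hx
    simp
  smul_mem' := by
    intro c a ha x hx
    simp [dotProduct_smul, ha x hx]

/-- `T` is a set of coset representatives of the subspace `W` in `𝔽₂ⁿ`: it contains exactly
one vector from each coset of `W`. -/
def IsCosetReps {n : ℕ} (W : Submodule (ZMod 2) (Fin n → ZMod 2))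
    (T : Set (Fin n → ZMod 2)) : Prop :=
  ∀ v : Fin n → ZMod 2, ∃! x, x ∈ T ∧ v - x ∈ W

/-- The rank-one operator `|ψ⟩⟨φ|`. -/
noncomputable def outer {ι : Type*} [Fintype ι] [DecidableEq ι]
    (ψ φ : EuclideanSpace ℂ ι) : EuclideanSpace ℂ ι →L[ℂ] EuclideanSpace ℂ ι :=
  (innerSL ℂ φ).smulRight ψ


/-!
Expand `|W_{x',z}⟩⟨W_{x',z}|` in the computational basis: for `u, v ∈ W` the coefficient of
`|x'+u⟩⟨x'+v|` in the sum over `z ∈ CS(W^⊥)` is `2^{-k} ∑_z (-1)^{z·(u-v)}`. The summand only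
depends on `z` modulo `W^⊥`, so this sum is `|W^⊥|⁻¹` times the full character sum
`∑_{z ∈ 𝔽₂ⁿ} (-1)^{z·(u-v)} = 2ⁿ δ_{uv}`; as `|W^⊥| = 2^{n-k}`, the coefficient is `δ_{uv}`.
-/

open scoped ComplexConjugate
open InnerProductSpace (rankOne)

noncomputable def signChar : AddChar (ZMod 2) ℂ where
  toFun t := (-1) ^ t.val
  map_zero_eq_one' := by simp
  map_add_eq_mul' a b := by rw [ZMod.val_add, ← neg_one_pow_eq_pow_mod_two, pow_add]

lemma signChar_apply (t : ZMod 2) : signChar t = (-1) ^ t.val := rfl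

lemma signChar_ne_one {a : ZMod 2} (ha : a ≠ 0) : signChar a ≠ 1 := by
  obtain rfl : a = 1 := by revert a; decide
  norm_num [signChar_apply, ZMod.val_one]

lemma nondegenerate_dotProductBilin {R ι : Type*} [CommSemiring R] [Fintype ι] :
    (dotProductBilin R R : (ι → R) →ₗ[R] (ι → R) →ₗ[R] R).Nondegenerate :=
  ⟨fun x hx => dotProduct_eq_zero x hx,
    fun y hy => dotProduct_eq_zero y fun x => by simpa [dotProduct_comm] using hy x⟩

lemma inv_sqrt_two_pow_mul_conj (k : ℕ) :
    ((Real.sqrt 2 : ℂ) ^ k)⁻¹ * conj ((Real.sqrt 2 : ℂ) ^ k)⁻¹ = ((2 : ℂ) ^ k)⁻¹ := by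
  rw [map_inv₀, map_pow, Complex.conj_ofReal, ← mul_inv, ← mul_pow, ← Complex.ofReal_mul,
    Real.mul_self_sqrt zero_le_two, Complex.ofReal_ofNat]

lemma outer_eq_rankOne {ι : Type*} [Fintype ι] [DecidableEq ι] (ψ φ : EuclideanSpace ℂ ι) :
    outer ψ φ = rankOne ℂ ψ φ := rfl

section
variable {n : ℕ}

lemma sum_signChar_dotProduct (w : Fin n → ZMod 2) :
    ∑ v, signChar (v ⬝ᵥ w) = if w = 0 then 2 ^ n else 0 := by
  split_ifs with hw
  · simp [hw]
  obtain ⟨i, hi⟩ := Function.ne_iff.mp hw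
  have hflip : signChar (Pi.single i 1 ⬝ᵥ w) ≠ 1 := by
    rw [single_dotProduct, one_mul]
    exact signChar_ne_one hi
  refine eq_zero_of_mul_eq_self_left hflip ?_
  rw [Finset.mul_sum]
  exact Fintype.sum_equiv (Equiv.addLeft (Pi.single i 1)) _ _ fun v ↦ by
    rw [Equiv.coe_addLeft, add_dotProduct, AddChar.map_add_eq_mul]

lemma dualSpace_eq_orthogonal (W : Submodule (ZMod 2) (Fin n → ZMod 2)) :
    dualSpace W = LinearMap.BilinForm.orthogonal (dotProductBilin (ZMod 2) (ZMod 2)) W := rfl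

lemma finrank_dualSpace (W : Submodule (ZMod 2) (Fin n → ZMod 2)) :
    Module.finrank (ZMod 2) (dualSpace W) = n - Module.finrank (ZMod 2) W := by
  rw [dualSpace_eq_orthogonal,
    LinearMap.BilinForm.finrank_orthogonal nondegenerate_dotProductBilin, Module.finrank_fin_fun]

namespace IsCosetReps
variable {A : Submodule (ZMod 2) (Fin n → ZMod 2)} {T : Set (Fin n → ZMod 2)}

lemma bijective_add (hT : IsCosetReps A T) :
    Function.Bijective fun p : T × A => (p.1 : Fin n → ZMod 2) + p.2 := by
  constructor
  · rintro ⟨t, a⟩ ⟨t', a'⟩ (h : (t : Fin n → ZMod 2) + a = t' + a')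
    have ht : (t : Fin n → ZMod 2) = t' :=
      (hT (t + a)).unique ⟨t.2, by simp⟩ ⟨t'.2, by simp [h]⟩
    rw [ht] at h
    exact Prod.ext (Subtype.ext ht) (Subtype.ext (add_left_cancel h))
  · intro v
    obtain ⟨t, ⟨ht, hv⟩, -⟩ := hT v
    exact ⟨(⟨t, ht⟩, ⟨v - t, hv⟩), add_sub_cancel t v⟩

lemma sum_eq_card_smul {M : Type*} [AddCommMonoid M] (hT : IsCosetReps A T)
    {f : (Fin n → ZMod 2) → M} (hf : ∀ v, ∀ a ∈ A, f (v + a) = f v) :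
    ∑ v, f v = Fintype.card A • ∑ t : T, f t := by
  rw [← Fintype.sum_bijective _ hT.bijective_add (fun p => f p.1) f fun p => (hf _ _ p.2.2).symm,
    Fintype.sum_prod_type, Finset.smul_sum]
  simp

lemma sum_signChar_dotProduct {W : Submodule (ZMod 2) (Fin n → ZMod 2)}
    (hT : IsCosetReps (dualSpace W) T) {w : Fin n → ZMod 2} (hw : w ∈ W) :
    ∑ z : T, signChar (z ⬝ᵥ w) = if w = 0 then 2 ^ Module.finrank (ZMod 2) W else 0 := by
  have hsum := hT.sum_eq_card_smul (f := fun v => signChar (v ⬝ᵥ w)) fun v a ha => by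
    rw [add_dotProduct, dotProduct_comm a, ha w hw, add_zero]
  rw [_root_.sum_signChar_dotProduct, Module.card_eq_pow_finrank (K := ZMod 2), ZMod.card,
    finrank_dualSpace, nsmul_eq_mul] at hsum
  have hk : Module.finrank (ZMod 2) W ≤ n := by
    simpa using Submodule.finrank_le W
  have hpow : (2 : ℂ) ^ n =
      2 ^ (n - Module.finrank (ZMod 2) W) * 2 ^ Module.finrank (ZMod 2) W := by
    rw [← pow_add, Nat.sub_add_cancel hk]
  refine mul_left_cancel₀ (pow_ne_zero (n - Module.finrank (ZMod 2) W) two_ne_zero) ?_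
  push_cast at hsum
  split_ifs at hsum ⊢
  · rw [← hsum, hpow]
  · rw [← hsum, mul_zero]

end IsCosetReps

lemma rankOne_cosetState_self (W : Submodule (ZMod 2) (Fin n → ZMod 2)) (x z : Fin n → ZMod 2) :
    rankOne ℂ (cosetState W x z) (cosetState W x z) =
      ∑ u : W, ∑ v : W,
        (((2 : ℂ) ^ Module.finrank (ZMod 2) W)⁻¹ * signChar (z ⬝ᵥ ((u : Fin n → ZMod 2) - v))) •
          rankOne ℂ (EuclideanSpace.single (x + u) (1 : ℂ)) (EuclideanSpace.single (x + v) 1) := by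
  simp only [cosetState, map_smul, map_sum, map_smulₛₗ, smul_apply, sum_apply, Finset.smul_sum,
    smul_smul]
  rw [Finset.sum_comm]
  refine Finset.sum_congr rfl fun u _ => Finset.sum_congr rfl fun v _ => ?_
  congr 1
  rw [← signChar_apply, ← signChar_apply, dotProduct_sub, sub_eq_add_neg, AddChar.map_add_eq_mul,
    AddChar.map_neg_eq_conj, ← inv_sqrt_two_pow_mul_conj, map_mul]
  ring

lemma IsCosetReps.sum_rankOne_cosetState {W : Submodule (ZMod 2) (Fin n → ZMod 2)}
    {T : Set (Fin n → ZMod 2)}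
    (hT : IsCosetReps (dualSpace W) T) (x : Fin n → ZMod 2) :
    ∑ z : T, rankOne ℂ (cosetState W x z) (cosetState W x z) =
      ∑ u : W, rankOne ℂ (EuclideanSpace.single (x + u) (1 : ℂ))
        (EuclideanSpace.single (x + u) 1) := by
  have hcoef (u v : W) : ∑ z : T, ((2 : ℂ) ^ Module.finrank (ZMod 2) W)⁻¹ *
      signChar ((z : Fin n → ZMod 2) ⬝ᵥ ((u : Fin n → ZMod 2) - v)) = if u = v then 1 else 0 := by
    rw [← Finset.mul_sum, hT.sum_signChar_dotProduct (W.sub_mem u.2 v.2)]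
    simp [sub_eq_zero]
  simp only [rankOne_cosetState_self]
  rw [Finset.sum_comm]
  refine Finset.sum_congr rfl fun u _ => ?_
  rw [Finset.sum_comm]
  simp only [← Finset.sum_smul, hcoef, ite_smul, one_smul, zero_smul, Finset.sum_ite_eq,
    Finset.mem_univ, if_true]

end

theorem sum_outer_cosetState_eq_proj {n : ℕ} (W : Submodule (ZMod 2) (Fin n → ZMod 2))
    (x' : Fin n → ZMod 2) (T' : Set (Fin n → ZMod 2)) (hT' : IsCosetReps (dualSpace W) T') :
    ∑ z' : T', outer (cosetState W x' (z' : Fin n → ZMod 2))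
        (cosetState W x' (z' : Fin n → ZMod 2)) =
      ∑ w : {w : Fin n → ZMod 2 // w - x' ∈ W},
        outer (EuclideanSpace.single (w : Fin n → ZMod 2) (1 : ℂ))
          (EuclideanSpace.single (w : Fin n → ZMod 2) (1 : ℂ)) := by
  simp only [outer_eq_rankOne, hT'.sum_rankOne_cosetState]
  exact Fintype.sum_equiv ((Equiv.addLeft x').subtypeEquiv fun u => by simp) _ _ fun u => rfl
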